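/- Ω(√(KT)) regret lower bound for stochastic bandits: There exist absolute constants c > 0 and γ > 0 with the following property. For every number of arms K ≥ 2 and time horizon T such that ε := √(cK/T) ≤ 1/2, and every randomized bandit algorithm (a probability distribution over deterministic bandit algorithms), if an arm a is drawn uniformly at random from [K] and the algorithm is run on problem instance I_a(ε), then the expected regret satisfies E[R(T)] ≥ γ·√(KT), where R(T) = (ε/2)·|{t ∈ [T] : a_t ≠ a}| is the regret under instance I_a(ε), a_t is the arm chosen in round t, and the expectation is over the choice of a, the rewards, and the algorithm's randomization. -/

import Mathlib

/-- The probability that a deterministic bandit algorithm `A` (with 0/1 rewards and `K` arms),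
run on the mean-reward vector `μ`, observes the reward sequence `r : Fin T → Bool`:
conditionally on the first `t-1` rewards, the reward in round `t` equals `1` with
probability `μ a_t`, where `a_t = A t (prefix of r)`. -/
noncomputable def seqProb {K T : ℕ} (A : (t : Fin T) → (Fin t.1 → Bool) → Fin K)
    (μ : Fin K → ℝ) (r : Fin T → Bool) : ℝ :=
  ∏ t : Fin T,
    if r t then μ (A t fun s => r ⟨s.1, s.2.trans t.2⟩)
    else 1 - μ (A t fun s => r ⟨s.1, s.2.trans t.2⟩)

/-- Problem instance `I_j(ε)`: arm `j` has mean reward `(1+ε)/2`, all other arms `1/2`. -/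
noncomputable def instMu (K : ℕ) (j : Fin K) (ε : ℝ) : Fin K → ℝ :=
  fun i => if i = j then (1 + ε) / 2 else 1 / 2

/-- A deterministic bandit algorithm: the arm chosen in round `t` is a function of the
previously observed rewards. -/
abbrev DetAlg (K T : ℕ) := (t : Fin T) → (Fin t.1 → Bool) → Fin K

/-- The number of rounds in which the algorithm `A`, upon observing reward sequence `r`,
chooses an arm different from `a`. -/
def regretCount {K T : ℕ} (A : DetAlg K T) (r : Fin T → Bool) (a : Fin K) : ℕ :=
  (Finset.univ.filter (fun t : Fin T => A t (fun s => r ⟨s.1, s.2.trans t.2⟩) ≠ a)).card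

/-!
Compare each instance `I_a(ε)` with the reward distribution `Q` of the all-`1/2` instance,
under which rewards are uniform and independent of the algorithm. For every deterministic
algorithm, `√(P_a/Q) = exp(½ ∑ₜ log(2 pₜ))` with `pₜ` the conditional probability of the
`t`-th reward; bounding `exp` below by `1 + x` and averaging each round's factor over the
uniform `t`-th reward shows that `∑ (√P_a - √Q)²` is at most `ε²` times the mean number `n_a`
of pulls of arm `a` under `Q`. By Cauchy–Schwarz, the mean number of pulls of `a` under `P_a`
thus exceeds `n_a` by at most `2Tε√n_a`. Since `∑ₐ n_a = T`, another Cauchy–Schwarz gives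
`∑ₐ √n_a ≤ √(KT)`, so averaged over `a` the arm `a` is pulled at most `T/K + 2Tε√(T/K)`
times; with `ε = √(K/(64T))` this leaves `Ω(T)` rounds on suboptimal arms, each costing `ε/2`.
-/

section

open Finset Real

section Bhattacharyya

variable {α : Type*} [Fintype α]

noncomputable def bhattacharyyaCoeff (P Q : α → ℝ) : ℝ :=
  ∑ x, √(P x * Q x)

variable {P Q : α → ℝ}

theorem sum_sq_sqrt_sub_sqrt (hP : ∀ x, 0 ≤ P x) (hQ : ∀ x, 0 ≤ Q x)
    (hP1 : ∑ x, P x = 1) (hQ1 : ∑ x, Q x = 1) :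
    ∑ x, (√(P x) - √(Q x)) ^ 2 = 2 - 2 * bhattacharyyaCoeff P Q := by
  have expand : ∀ x, (√(P x) - √(Q x)) ^ 2 = P x + Q x - 2 * √(P x * Q x) := fun x => by
    rw [sub_sq, sq_sqrt (hP x), sq_sqrt (hQ x), sqrt_mul (hP x)]
    ring
  simp only [expand, sum_sub_distrib, sum_add_distrib, hP1, hQ1, ← mul_sum, bhattacharyyaCoeff]
  ring

theorem sum_sub_mul_le_of_abs_le {f : α → ℝ} {M : ℝ} (hP : ∀ x, 0 ≤ P x) (hQ : ∀ x, 0 ≤ Q x)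
    (hP1 : ∑ x, P x = 1) (hQ1 : ∑ x, Q x = 1) (hf : ∀ x, |f x| ≤ M) :
    ∑ x, (P x - Q x) * f x ≤ 2 * M * √(2 - 2 * bhattacharyyaCoeff P Q) := by
  have hM : 0 ≤ M := by
    rcases isEmpty_or_nonempty α with _ | ⟨⟨x⟩⟩
    · simp at hP1
    · exact (abs_nonneg _).trans (hf x)
  have factor : ∀ x, (P x - Q x) * f x = (√(P x) - √(Q x)) * ((√(P x) + √(Q x)) * f x) :=
    fun x => by
      nth_rewrite 1 [← sq_sqrt (hP x), ← sq_sqrt (hQ x)]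
      ring
  have bound : ∀ x, ((√(P x) + √(Q x)) * f x) ^ 2 ≤ (2 * P x + 2 * Q x) * M ^ 2 := fun x => by
    have h1 : (√(P x) + √(Q x)) ^ 2 ≤ 2 * P x + 2 * Q x := by
      nlinarith [sq_nonneg (√(P x) - √(Q x)), sq_sqrt (hP x), sq_sqrt (hQ x)]
    rw [mul_pow]
    exact mul_le_mul h1 (sq_le_sq' (abs_le.mp (hf x)).1 (abs_le.mp (hf x)).2) (sq_nonneg _)
      (by linarith [hP x, hQ x])
  calc ∑ x, (P x - Q x) * f x
      ≤ √(∑ x, (√(P x) - √(Q x)) ^ 2) * √(∑ x, ((√(P x) + √(Q x)) * f x) ^ 2) := by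
        simp only [factor]
        exact sum_mul_le_sqrt_mul_sqrt _ _ _
    _ ≤ √(2 - 2 * bhattacharyyaCoeff P Q) * √((2 * M) ^ 2) := by
        rw [sum_sq_sqrt_sub_sqrt hP hQ hP1 hQ1]
        gcongr
        calc ∑ x, ((√(P x) + √(Q x)) * f x) ^ 2 ≤ ∑ x, (2 * P x + 2 * Q x) * M ^ 2 :=
              sum_le_sum fun x _ => bound x
          _ = (2 * M) ^ 2 := by
              rw [← sum_mul, sum_add_distrib, ← mul_sum, ← mul_sum, hP1, hQ1]
              ring
    _ = 2 * M * √(2 - 2 * bhattacharyyaCoeff P Q) := by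
        rw [sqrt_sq (by positivity)]
        ring

end Bhattacharyya

theorem sqrt_div_mul_self_eq_sqrt_mul (x : ℝ) {y : ℝ} (hy : 0 ≤ y) : √(x / y) * y = √(x * y) := by
  rw [sqrt_div' x hy, div_mul_eq_mul_div, mul_div_assoc, div_sqrt, sqrt_mul' x hy]

theorem neg_log_one_sub_le {x : ℝ} (hx0 : 0 ≤ x) (hx : x ≤ 1 / 2) : -log (1 - x) ≤ 2 * x := by
  have h := one_sub_inv_le_log_of_pos (show 0 < 1 - x by linarith)
  have hinv : (1 - x)⁻¹ ≤ 1 + 2 * x := by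
    rw [inv_le_iff_one_le_mul₀ (by linarith)]
    nlinarith
  linarith

section Bandit

variable {K T : ℕ}

def rewardPrefix (r : Fin T → Bool) (t : Fin T) : Fin t.1 → Bool :=
  fun s => r ⟨s.1, s.2.trans t.2⟩

def armAt (A : DetAlg K T) (r : Fin T → Bool) (t : Fin T) : Fin K :=
  A t (rewardPrefix r t)

def stepProb (A : DetAlg K T) (μ : Fin K → ℝ) (r : Fin T → Bool) (t : Fin T) : ℝ :=
  if r t then μ (armAt A r t) else 1 - μ (armAt A r t)

theorem seqProb_eq_prod_stepProb (A : DetAlg K T) (μ : Fin K → ℝ) (r : Fin T → Bool) :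
    seqProb A μ r = ∏ t, stepProb A μ r t :=
  rfl

def pullCount (A : DetAlg K T) (r : Fin T → Bool) (a : Fin K) : ℕ :=
  #{t | armAt A r t = a}

theorem regretCount_add_pullCount (A : DetAlg K T) (r : Fin T → Bool) (a : Fin K) :
    regretCount A r a + pullCount A r a = T := by
  rw [add_comm]
  have h := card_filter_add_card_filter_not (s := univ) (fun t => armAt A r t = a)
  rwa [card_univ, Fintype.card_fin] at h

theorem sum_pullCount (A : DetAlg K T) (r : Fin T → Bool) : ∑ a, pullCount A r a = T := by
  have h := card_eq_sum_card_fiberwise (f := armAt A r) (s := univ) (t := univ)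
    fun _ _ => mem_univ _
  rw [card_univ, Fintype.card_fin] at h
  exact h.symm

theorem sum_apply_rewardPrefix_eq_sum_average (t : Fin T) (h : (Fin t.1 → Bool) → Bool → ℝ) :
    ∑ r : Fin T → Bool, h (rewardPrefix r t) (r t) =
      ∑ r : Fin T → Bool, (h (rewardPrefix r t) true + h (rewardPrefix r t) false) / 2 := by
  let toggle : (Fin T → Bool) → (Fin T → Bool) := fun r => Function.update r t (!r t)
  have toggle_involutive : Function.Involutive toggle := fun r => by
    ext i
    by_cases hi : i = t
    · subst hi; simp [toggle]
    · simp [toggle, Function.update_of_ne hi]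
  have prefix_toggle : ∀ r, rewardPrefix (toggle r) t = rewardPrefix r t := fun r => by
    ext s
    exact Function.update_of_ne (fun hs => s.2.ne (congrArg Fin.val hs)) _ _
  have sum_toggle : ∑ r : Fin T → Bool, h (rewardPrefix r t) (!r t) =
      ∑ r : Fin T → Bool, h (rewardPrefix r t) (r t) :=
    Fintype.sum_bijective toggle toggle_involutive.bijective _ _ fun r => by
      simp [prefix_toggle, toggle]
  rw [← sum_div, eq_div_iff two_ne_zero, mul_two]
  nth_rewrite 2 [← sum_toggle]
  rw [← sum_add_distrib]
  refine sum_congr rfl fun r _ => ?_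
  cases r t <;> simp [add_comm]

def DetAlg.init (A : DetAlg K (T + 1)) : DetAlg K T :=
  fun t => A t.castSucc

theorem seqProb_snoc (A : DetAlg K (T + 1)) (μ : Fin K → ℝ) (r : Fin T → Bool) (b : Bool) :
    seqProb A μ (Fin.snoc r b) =
      seqProb A.init μ r * (if b then μ (A (Fin.last T) r) else 1 - μ (A (Fin.last T) r)) := by
  have prefix_castSucc : ∀ t : Fin T, rewardPrefix (Fin.snoc r b : Fin (T + 1) → Bool) t.castSucc =
      rewardPrefix r t := fun t => by
    ext s
    exact Fin.snoc_castSucc (α := fun _ => Bool) (i := ⟨s.1, s.2.trans t.2⟩) ..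
  have prefix_last : rewardPrefix (Fin.snoc r b : Fin (T + 1) → Bool) (Fin.last T) = r := by
    ext s
    exact Fin.snoc_castSucc (α := fun _ => Bool) (i := s) ..
  simp only [seqProb_eq_prod_stepProb, stepProb, armAt, Fin.prod_univ_castSucc, prefix_castSucc,
    prefix_last, Fin.snoc_castSucc, Fin.snoc_last]
  rfl

theorem sum_seqProb (A : DetAlg K T) (μ : Fin K → ℝ) : ∑ r, seqProb A μ r = 1 := by
  induction T with
  | zero => simp [seqProb]
  | succ T ih =>
    rw [← Fintype.sum_equiv (Fin.snocEquiv fun _ => Bool)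
      (fun p => seqProb A μ (Fin.snoc p.2 p.1)) _ fun _ => rfl, Fintype.sum_prod_type_right]
    simp only [seqProb_snoc, Fintype.sum_bool, if_true, Bool.false_eq_true, if_false, ← mul_add,
      add_sub_cancel, mul_one, ih]

theorem sum_inv_two_pow : ∑ _r : Fin T → Bool, ((2 : ℝ) ^ T)⁻¹ = 1 := by
  simp

section MeanRewardsInUnitInterval

variable {μ : Fin K → ℝ} (hμ0 : ∀ i, 0 < μ i) (hμ1 : ∀ i, μ i < 1)
include hμ0 hμ1

theorem stepProb_pos (A : DetAlg K T) (r : Fin T → Bool) (t : Fin T) : 0 < stepProb A μ r t := by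
  unfold stepProb
  split
  · exact hμ0 _
  · linarith [hμ1 (armAt A r t)]

theorem uniform_mul_one_add_le_sqrt_seqProb_mul (A : DetAlg K T) (r : Fin T → Bool) :
    (2 ^ T)⁻¹ * (1 + (∑ t, log (2 * stepProb A μ r t)) / 2) ≤ √(seqProb A μ r * (2 ^ T)⁻¹) := by
  have hpos : ∀ t, 0 < 2 * stepProb A μ r t := fun t => by
    linarith [stepProb_pos hμ0 hμ1 A r t]
  have hprod : seqProb A μ r * (2 ^ T)⁻¹ = ((2 ^ T)⁻¹) ^ 2 * ∏ t, 2 * stepProb A μ r t := by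
    rw [prod_mul_distrib, prod_const, card_univ, Fintype.card_fin, seqProb_eq_prod_stepProb]
    field_simp
  -- `√(2ᵀ P) = exp (½ log (2ᵀ P)) ≥ 1 + ½ log (2ᵀ P)`
  rw [hprod, sqrt_mul (by positivity), sqrt_sq (by positivity), sqrt_eq_rpow,
    rpow_def_of_pos (prod_pos fun t _ => hpos t), log_prod fun t _ => (hpos t).ne']
  gcongr
  linarith [add_one_le_exp ((∑ t, log (2 * stepProb A μ r t)) * (1 / 2))]

theorem sum_log_two_mul_stepProb (A : DetAlg K T) (t : Fin T) :
    ∑ r, log (2 * stepProb A μ r t) =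
      ∑ r, log (4 * μ (armAt A r t) * (1 - μ (armAt A r t))) / 2 := by
  refine (sum_apply_rewardPrefix_eq_sum_average t
    fun pre b => log (2 * if b then μ (A t pre) else 1 - μ (A t pre))).trans
    (sum_congr rfl fun r _ => ?_)
  have h0 := hμ0 (armAt A r t)
  have h1 := hμ1 (armAt A r t)
  show (log (2 * μ (armAt A r t)) + log (2 * (1 - μ (armAt A r t)))) / 2 = _
  rw [← log_mul (by positivity) (by linarith)]
  ring_nf

theorem one_add_sum_log_le_bhattacharyyaCoeff (A : DetAlg K T) :
    1 + (2 ^ T)⁻¹ / 4 * ∑ r, ∑ t, log (4 * μ (armAt A r t) * (1 - μ (armAt A r t))) ≤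
      bhattacharyyaCoeff (seqProb A μ) fun _ => (2 ^ T)⁻¹ := by
  calc _ = ∑ r : Fin T → Bool, (2 ^ T)⁻¹ * (1 + (∑ t, log (2 * stepProb A μ r t)) / 2) := by
        simp only [mul_add, mul_one, sum_add_distrib, sum_inv_two_pow, mul_div_assoc', ← sum_div,
          ← mul_sum]
        rw [sum_comm (f := fun r t => log (2 * stepProb A μ r t))]
        simp only [sum_log_two_mul_stepProb hμ0 hμ1, ← sum_div]
        rw [sum_comm]
        ring
    _ ≤ _ := sum_le_sum fun r _ => uniform_mul_one_add_le_sqrt_seqProb_mul hμ0 hμ1 A r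

end MeanRewardsInUnitInterval

theorem pullCount_le (A : DetAlg K T) (r : Fin T → Bool) (a : Fin K) : pullCount A r a ≤ T := by
  have := regretCount_add_pullCount A r a
  omega

theorem sum_seqProb_mul_regretCount (A : DetAlg K T) (μ : Fin K → ℝ) (a : Fin K) :
    ∑ r, seqProb A μ r * regretCount A r a = T - ∑ r, seqProb A μ r * pullCount A r a := by
  have hregret : ∀ r, (regretCount A r a : ℝ) = T - pullCount A r a := fun r => by
    rw [eq_sub_iff_add_eq, ← Nat.cast_add, regretCount_add_pullCount]
  simp only [hregret, mul_sub, sum_sub_distrib, ← sum_mul, sum_seqProb, one_mul]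

noncomputable def uniformMeanPulls (A : DetAlg K T) (a : Fin K) : ℝ :=
  (2 ^ T)⁻¹ * ∑ r, (pullCount A r a : ℝ)

theorem uniformMeanPulls_nonneg (A : DetAlg K T) (a : Fin K) : 0 ≤ uniformMeanPulls A a := by
  unfold uniformMeanPulls
  positivity

theorem sum_uniformMeanPulls (A : DetAlg K T) : ∑ a, uniformMeanPulls A a = T := by
  simp only [uniformMeanPulls, ← mul_sum]
  rw [sum_comm]
  simp only [← Nat.cast_sum, sum_pullCount, sum_const, card_univ, Fintype.card_fun,
    Fintype.card_bool, Fintype.card_fin, nsmul_eq_mul]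
  push_cast
  field_simp

theorem sum_sqrt_uniformMeanPulls_le (A : DetAlg K T) :
    ∑ a, √(uniformMeanPulls A a) ≤ √(K * T) := by
  have h := sum_sqrt_mul_sqrt_le univ (fun _ => zero_le_one) (uniformMeanPulls_nonneg A)
  simp only [sqrt_one, one_mul, sum_const, card_univ, Fintype.card_fin, nsmul_eq_mul, mul_one,
    sum_uniformMeanPulls] at h
  rwa [sqrt_mul (Nat.cast_nonneg K)]

theorem instMu_pos {ε : ℝ} (hε : -1 < ε) (a i : Fin K) : 0 < instMu K a ε i := by
  unfold instMu
  split <;> linarith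

theorem instMu_lt_one {ε : ℝ} (hε : ε < 1) (a i : Fin K) : instMu K a ε i < 1 := by
  unfold instMu
  split <;> linarith

theorem sum_log_four_mul_instMu_mul_one_sub (A : DetAlg K T) (r : Fin T → Bool) (a : Fin K)
    (ε : ℝ) :
    ∑ t, log (4 * instMu K a ε (armAt A r t) * (1 - instMu K a ε (armAt A r t))) =
      log (1 - ε ^ 2) * pullCount A r a := by
  have hlog : ∀ i, log (4 * instMu K a ε i * (1 - instMu K a ε i)) =
      if i = a then log (1 - ε ^ 2) else 0 := fun i => by
    unfold instMu
    split
    · ring_nf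
    · norm_num
  simp only [hlog, sum_ite, sum_const_zero, add_zero, sum_const, nsmul_eq_mul, pullCount]
  ring

theorem two_sub_two_mul_bhattacharyyaCoeff_le (A : DetAlg K T) (a : Fin K) {ε : ℝ}
    (hε : ε ^ 2 ≤ 1 / 2) :
    2 - 2 * bhattacharyyaCoeff (seqProb A (instMu K a ε)) (fun _ => (2 ^ T)⁻¹) ≤
      ε ^ 2 * uniformMeanPulls A a := by
  have hε1 : |ε| < 1 := by
    rw [← sq_lt_one_iff_abs_lt_one]
    linarith
  have h := one_add_sum_log_le_bhattacharyyaCoeff (instMu_pos (abs_lt.mp hε1).1 a)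
    (instMu_lt_one (abs_lt.mp hε1).2 a) A
  simp only [sum_log_four_mul_instMu_mul_one_sub, ← mul_sum] at h
  have hlog := neg_log_one_sub_le (sq_nonneg ε) hε
  have hn := uniformMeanPulls_nonneg A a
  unfold uniformMeanPulls at hn ⊢
  linarith [mul_le_mul_of_nonneg_right hlog hn]

theorem sum_seqProb_instMu_mul_pullCount_le (A : DetAlg K T) (a : Fin K) {ε : ℝ} (hε0 : 0 ≤ ε)
    (hε : ε ^ 2 ≤ 1 / 2) :
    ∑ r, seqProb A (instMu K a ε) r * pullCount A r a ≤
      uniformMeanPulls A a + 2 * T * ε * √(uniformMeanPulls A a) := by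
  have hμ0 := instMu_pos (show -1 < ε by linarith) a
  have hμ1 := instMu_lt_one (show ε < 1 by nlinarith) a
  have hP : ∀ r, 0 ≤ seqProb A (instMu K a ε) r := fun r =>
    (prod_pos fun t _ => stepProb_pos hμ0 hμ1 A r t).le
  have hN : ∀ r, |(pullCount A r a : ℝ)| ≤ T := fun r => by
    rw [Nat.abs_cast]
    exact_mod_cast pullCount_le A r a
  calc ∑ r, seqProb A (instMu K a ε) r * pullCount A r a
      = ∑ r, (seqProb A (instMu K a ε) r - (2 ^ T)⁻¹) * pullCount A r a +
          uniformMeanPulls A a := by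
        simp only [sub_mul, sum_sub_distrib, uniformMeanPulls, mul_sum]
        ring
    _ ≤ 2 * T * √(2 - 2 * bhattacharyyaCoeff (seqProb A (instMu K a ε)) fun _ => (2 ^ T)⁻¹) +
          uniformMeanPulls A a := by
        gcongr
        exact sum_sub_mul_le_of_abs_le hP (fun _ => by positivity) (sum_seqProb _ _)
          sum_inv_two_pow hN
    _ ≤ 2 * T * √(ε ^ 2 * uniformMeanPulls A a) + uniformMeanPulls A a := by
        gcongr
        exact two_sub_two_mul_bhattacharyyaCoeff_le A a hε
    _ = _ := by
        rw [sqrt_mul (sq_nonneg ε), sqrt_sq hε0]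
        ring

theorem le_sum_seqProb_instMu_mul_regret (A : DetAlg K T) {ε : ℝ} (hε0 : 0 ≤ ε)
    (hε : ε ^ 2 ≤ 1 / 2) :
    ε / 2 * (K * T - T - 2 * T * ε * √(K * T)) ≤
      ∑ a, ∑ r, seqProb A (instMu K a ε) r * (ε / 2 * regretCount A r a) := by
  simp only [mul_left_comm _ (ε / 2), ← mul_sum, sum_seqProb_mul_regretCount]
  gcongr
  calc (K : ℝ) * T - T - 2 * T * ε * √(K * T)
      ≤ ∑ a : Fin K, (T - uniformMeanPulls A a) - 2 * T * ε * ∑ a, √(uniformMeanPulls A a) := by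
        rw [sum_sub_distrib, sum_uniformMeanPulls]
        simp only [sum_const, card_univ, Fintype.card_fin, nsmul_eq_mul]
        have := sum_sqrt_uniformMeanPulls_le A
        gcongr
    _ ≤ ∑ a, (T - ∑ r, seqProb A (instMu K a ε) r * pullCount A r a) := by
        rw [mul_sum, ← sum_sub_distrib]
        exact sum_le_sum fun a _ => by linarith [sum_seqProb_instMu_mul_pullCount_le A a hε0 hε]

end Bandit

end

/-- **Ω(√(KT)) regret lower bound for stochastic bandits.**
There are absolute constants `c, γ > 0` such that for all `K ≥ 2` and `T` with
`ε := √(cK/T) ≤ 1/2`, and every randomized bandit algorithm `π` (a distribution over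
deterministic algorithms), if an arm `a` is drawn uniformly from `[K]` and the algorithm
is run on instance `I_a(ε)`, then `E[R(T)] ≥ γ√(KT)`, where
`R(T) = (ε/2) · #{t : a_t ≠ a}` is the regret under instance `I_a(ε)`. -/
theorem stochastic_bandits_regret_lower_bound :
    ∃ c > (0 : ℝ), ∃ γ > (0 : ℝ), ∀ (K T : ℕ), 2 ≤ K →
      Real.sqrt (c * K / T) ≤ 1 / 2 →
      ∀ π : DetAlg K T → ℝ,
        (∀ alg, 0 ≤ π alg) → (∑ alg, π alg) = 1 →
        γ * Real.sqrt (K * T) ≤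
          (K : ℝ)⁻¹ * ∑ a : Fin K, ∑ alg : DetAlg K T, π alg *
            ∑ r : Fin T → Bool,
              seqProb alg (instMu K a (Real.sqrt (c * K / T))) r *
                ((Real.sqrt (c * K / T) / 2) * (regretCount alg r a : ℝ)) := by
  refine ⟨1 / 64, by norm_num, 1 / 64, by norm_num, fun K T hK hε π hπ0 hπ1 => ?_⟩
  set ε := √(1 / 64 * K / T)
  have hK : (2 : ℝ) ≤ K := by exact_mod_cast hK
  have hε0 : 0 ≤ ε := Real.sqrt_nonneg _
  have hεT : ε * T = √(K * T) / 8 := by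
    rw [sqrt_div_mul_self_eq_sqrt_mul _ (Nat.cast_nonneg T), mul_assoc, Real.sqrt_mul (by norm_num),
      show (1 / 64 : ℝ) = (1 / 8) ^ 2 by norm_num, Real.sqrt_sq (by norm_num)]
    ring
  have hB : 1 / 64 * √(K * T) ≤ (K : ℝ)⁻¹ * (ε / 2 * (K * T - T - 2 * T * ε * √(K * T))) := by
    have hεs : 2 * T * ε * √(K * T) = K * T / 4 := by
      rw [mul_assoc 2, mul_comm (T : ℝ) ε, hεT]
      linarith [Real.mul_self_sqrt (mul_nonneg (Nat.cast_nonneg K) (Nat.cast_nonneg T))]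
    have hT : (T : ℝ) ≤ K * T / 2 := by nlinarith
    rw [hεs, le_inv_mul_iff₀ (by positivity)]
    calc (K : ℝ) * (1 / 64 * √(K * T)) = ε / 2 * (K * T / 4) := by
          linear_combination -(K : ℝ) / 8 * hεT
      _ ≤ ε / 2 * (K * T - T - K * T / 4) := by gcongr; linarith
  calc 1 / 64 * √(K * T)
      ≤ (K : ℝ)⁻¹ * (ε / 2 * (K * T - T - 2 * T * ε * √(K * T))) := hB
    _ ≤ (K : ℝ)⁻¹ * ∑ alg, π alg * ∑ a, ∑ r, seqProb alg (instMu K a ε) r *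
          (ε / 2 * regretCount alg r a) := by
        gcongr
        calc _ = ∑ alg, π alg * (ε / 2 * (K * T - T - 2 * T * ε * √(K * T))) := by
              rw [← Finset.sum_mul, hπ1, one_mul]
          _ ≤ _ := Finset.sum_le_sum fun alg _ => mul_le_mul_of_nonneg_left
              (le_sum_seqProb_instMu_mul_regret alg hε0 (by nlinarith)) (hπ0 alg)
    _ = _ := by
        simp only [Finset.mul_sum]
        rw [Finset.sum_comm]
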